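/- Let f be a good càdlàg function on [0,T] without negative jumps, and let (l₁,r₁) and (l₂,r₂) be two excursion intervals of f with l₁ < l₂. Then r₁ < l₂; that is, excursion intervals of a good function are not nested and are pairwise disjoint and ordered. -/

import Mathlib

open Set Function

/-- `f` has left limits at every point. -/
def HasLeftLimits (f : ℝ → ℝ) : Prop :=
  ∀ x : ℝ, ∃ l : ℝ, Filter.Tendsto f (nhdsWithin x (Iio x)) (nhds l)

/-- `f` is right-continuous. -/
def RightCont (f : ℝ → ℝ) : Prop :=
  ∀ x : ℝ, ContinuousWithinAt f (Ici x) x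

/-- `f` has no negative jumps. -/
def NoNegJumps (f : ℝ → ℝ) : Prop :=
  ∀ x : ℝ, Function.leftLim f x ≤ f x

/-- `(l, r)` is an excursion interval of `f`:
`f(l-) = f(r-) = inf_{t ≤ r} f(t)` and `f(t) > inf_{s ≤ l} f(s)` on `(l, r)`. -/
def IsExcursionInterval (f : ℝ → ℝ) (l r : ℝ) : Prop :=
  0 ≤ l ∧ l < r ∧
  Function.leftLim f l = sInf (f '' Icc 0 r) ∧
  Function.leftLim f r = sInf (f '' Icc 0 r) ∧
  ∀ t ∈ Ioo l r, sInf (f '' Icc 0 l) < f t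

/-- The right endpoints of excursion intervals of `f` contained in `[0, T]`. -/
def ExcEnds (f : ℝ → ℝ) (T : ℝ) : Set ℝ :=
  {r | ∃ l, IsExcursionInterval f l r ∧ r ≤ T}

/-- `f` is good on `[0, T]`: the excursion right-endpoints have no isolated points,
the complement of the union of excursion intervals in `[0, sup of endpoints]` is
Lebesgue-null, and `f` attains no local minimum at any excursion right-endpoint. -/
def GoodOn (f : ℝ → ℝ) (T : ℝ) : Prop :=
  (∀ r ∈ ExcEnds f T, r ∈ closure (ExcEnds f T \ {r})) ∧
  MeasureTheory.volume
      (Icc (0 : ℝ) (sSup (ExcEnds f T)) \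
        ⋃ p ∈ {p : ℝ × ℝ | IsExcursionInterval f p.1 p.2 ∧ p.2 ≤ T}, Ioo p.1 p.2) = 0 ∧
  ∀ r ∈ ExcEnds f T, ¬ IsLocalMin f r

/-!
Suppose `l₂ ≤ r₁`. If `l₂ < r₁`, then `(l₁, l₂)` is itself an excursion interval, so the excursion
endpoint `l₂` lies inside `(l₁, r₁)`. If `l₂ = r₁`, either `f(r₁)` equals the running infimum,
and `r₁` is a local minimum, or `(l₁, r₂)` is an excursion interval containing the endpoint `r₁`.

Excursion right endpoints cannot lie inside an excursion interval: right-continuity keeps `f` above the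
running infimum just after each of its points, so such endpoints are isolated from the right. As
endpoints are not isolated, they accumulate from the left, and the infimum of those to the right
of a fixed point is then both attained and a limit from the left, a contradiction.
-/

open Filter Topology

theorem bddBelow_image_of_isCompact_of_forall_eventually_le {X α : Type*} [TopologicalSpace X]
    [LinearOrder α] [Nonempty α] {f : X → α} {K : Set X} (hK : IsCompact K)
    (hf : ∀ x ∈ K, ∃ c, ∀ᶠ y in 𝓝 x, c ≤ f y) : BddBelow (f '' K) := by
  refine hK.induction_on (p := fun s => BddBelow (f '' s)) (by simp)
    (fun s t hst ht => ht.mono (image_mono hst))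
    (fun s t hs ht => by rw [image_union]; exact hs.union ht) fun x hx => ?_
  obtain ⟨c, hc⟩ := hf x hx
  exact ⟨{y | c ≤ f y}, mem_nhdsWithin_of_mem_nhds hc, c, by rintro _ ⟨y, hy, rfl⟩; exact hy⟩

theorem disjoint_Ioo_of_forall_mem_closure_diff_of_gaps {S : Set ℝ} {a b : ℝ}
    (hperf : ∀ s ∈ S, s ∈ closure (S \ {s}))
    (hgap : ∀ σ ∈ Ioo a b, ∃ u > σ, Disjoint S (Ioo σ u)) : Disjoint S (Ioo a b) := by
  refine disjoint_left.mpr fun ρ hρS hρ => ?_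
  obtain ⟨x, hax, hxρ⟩ := exists_between hρ.1
  have hne : (S ∩ Ioi x).Nonempty := ⟨ρ, hρS, hxρ⟩
  have hbdd : BddBelow (S ∩ Ioi x) := ⟨x, fun _ h => le_of_lt h.2⟩
  set σ := sInf (S ∩ Ioi x)
  have hσ : σ ∈ Ioo a b :=
    ⟨hax.trans_le (le_csInf hne fun _ h => le_of_lt h.2), (csInf_le hbdd ⟨hρS, hxρ⟩).trans_lt hρ.2⟩
  obtain ⟨u, hσu, hu⟩ := hgap σ hσ
  -- no point of `S` lies in `(σ, u)`, so the infimum is attained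
  have hσS : σ ∈ S ∩ Ioi x := by
    obtain ⟨s, hs, hsu⟩ := exists_lt_of_csInf_lt hne hσu
    obtain hσs | hσs := (csInf_le hbdd hs).eq_or_lt
    · rwa [show σ = s from hσs]
    · exact (disjoint_left.mp hu hs.1 ⟨hσs, hsu⟩).elim
  obtain ⟨τ, ⟨hxτ, hτu⟩, hτS, hτσ⟩ :=
    mem_closure_iff.mp (hperf σ hσS.1) (Ioo x u) isOpen_Ioo ⟨hσS.2, hσu⟩
  obtain hτσ | hστ := lt_or_gt_of_ne hτσ
  · exact (csInf_le hbdd ⟨hτS, hxτ⟩).not_gt hτσ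
  · exact disjoint_left.mp hu hτS ⟨hστ, hτu⟩

variable {f : ℝ → ℝ}

theorem HasLeftLimits.tendsto_leftLim (hll : HasLeftLimits f) (x : ℝ) :
    Tendsto f (𝓝[<] x) (𝓝 (leftLim f x)) := by
  obtain ⟨L, hL⟩ := hll x
  rwa [leftLim_eq_of_tendsto hL]

theorem HasLeftLimits.le_leftLim (hll : HasLeftLimits f) {a x c : ℝ} (hax : a < x)
    (h : ∀ t ∈ Ioo a x, c ≤ f t) : c ≤ leftLim f x :=
  ge_of_tendsto (hll.tendsto_leftLim x) (eventually_of_mem (Ioo_mem_nhdsLT hax) h)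

theorem RightCont.exists_eventually_le (hrc : RightCont f) (hll : HasLeftLimits f) (x : ℝ) :
    ∃ c, ∀ᶠ y in 𝓝 x, c ≤ f y := by
  obtain ⟨L, hL⟩ := hll x
  refine ⟨min (L - 1) (f x - 1), ?_⟩
  rw [← nhdsLT_sup_nhdsGE x, eventually_sup]
  exact ⟨hL.eventually (eventually_ge_nhds ((min_le_left _ _).trans_lt (by linarith))),
    (hrc x).eventually (eventually_ge_nhds ((min_le_right _ _).trans_lt (by linarith)))⟩

theorem RightCont.bddBelow_image_Icc (hrc : RightCont f) (hll : HasLeftLimits f) (a b : ℝ) :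
    BddBelow (f '' Icc a b) :=
  bddBelow_image_of_isCompact_of_forall_eventually_le isCompact_Icc
    fun x _ => hrc.exists_eventually_le hll x

theorem RightCont.sInf_image_Icc_le (hrc : RightCont f) (hll : HasLeftLimits f) {a b x : ℝ}
    (hx : x ∈ Icc a b) : sInf (f '' Icc a b) ≤ f x :=
  csInf_le (hrc.bddBelow_image_Icc hll a b) (mem_image_of_mem f hx)

theorem RightCont.sInf_image_Icc_le_of_le (hrc : RightCont f) (hll : HasLeftLimits f) {a b c : ℝ}
    (hcb : c ≤ b) (hba : b ≤ a) : sInf (f '' Icc c a) ≤ sInf (f '' Icc c b) :=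
  csInf_le_csInf (hrc.bddBelow_image_Icc hll c a) ((nonempty_Icc.2 hcb).image f)
    (image_mono (Icc_subset_Icc le_rfl hba))

theorem RightCont.sInf_image_Icc_eq (hrc : RightCont f) (hll : HasLeftLimits f) {l r : ℝ}
    (h0 : 0 ≤ l) (hlr : l < r) (hr : leftLim f r = sInf (f '' Icc 0 r))
    (hpos : ∀ t ∈ Ioo l r, sInf (f '' Icc 0 l) ≤ f t) :
    sInf (f '' Icc 0 l) = sInf (f '' Icc 0 r) :=
  le_antisymm (hr ▸ hll.le_leftLim hlr hpos) (hrc.sInf_image_Icc_le_of_le hll h0 hlr.le)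

namespace IsExcursionInterval

variable {l r r' : ℝ}

theorem sInf_eq (h : IsExcursionInterval f l r) (hrc : RightCont f) (hll : HasLeftLimits f) :
    sInf (f '' Icc 0 l) = sInf (f '' Icc 0 r) :=
  hrc.sInf_image_Icc_eq hll h.1 h.2.1 h.2.2.2.1 fun t ht => (h.2.2.2.2 t ht).le

theorem leftLim_left (h : IsExcursionInterval f l r) (hrc : RightCont f) (hll : HasLeftLimits f) :
    leftLim f l = sInf (f '' Icc 0 l) :=
  h.2.2.1.trans (h.sInf_eq hrc hll).symm

theorem of_leftLim_left (hrc : RightCont f) (hll : HasLeftLimits f) (h0 : 0 ≤ l) (hlr : l < r)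
    (hl : leftLim f l = sInf (f '' Icc 0 l)) (hr : leftLim f r = sInf (f '' Icc 0 r))
    (hpos : ∀ t ∈ Ioo l r, sInf (f '' Icc 0 l) < f t) : IsExcursionInterval f l r := by
  have hM := hrc.sInf_image_Icc_eq hll h0 hlr hr fun t ht => (hpos t ht).le
  exact ⟨h0, hlr, hM ▸ hl, hr, hpos⟩

theorem restrict {l₂ r₂ : ℝ} (h₁ : IsExcursionInterval f l r) (h₂ : IsExcursionInterval f l₂ r₂)
    (hrc : RightCont f) (hll : HasLeftLimits f) (hl : l < l₂) (hlr : l₂ < r) :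
    IsExcursionInterval f l l₂ :=
  of_leftLim_left hrc hll h₁.1 hl (h₁.leftLim_left hrc hll) (h₂.leftLim_left hrc hll)
    fun t ht => h₁.2.2.2.2 t ⟨ht.1, ht.2.trans hlr⟩

theorem sInf_lt_of_ne (h₁ : IsExcursionInterval f l r) (h₂ : IsExcursionInterval f r r')
    (hrc : RightCont f) (hll : HasLeftLimits f) {t : ℝ} (ht : t ∈ Ioo l r') (htr : t ≠ r) :
    sInf (f '' Icc 0 r) < f t := by
  obtain htr | hrt := lt_or_gt_of_ne htr
  · exact h₁.sInf_eq hrc hll ▸ h₁.2.2.2.2 t ⟨ht.1, htr⟩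
  · exact h₂.2.2.2.2 t ⟨hrt, ht.2⟩

theorem append (h₁ : IsExcursionInterval f l r) (h₂ : IsExcursionInterval f r r')
    (hrc : RightCont f) (hll : HasLeftLimits f) (hr : sInf (f '' Icc 0 r) < f r) :
    IsExcursionInterval f l r' := by
  refine of_leftLim_left hrc hll h₁.1 (h₁.2.1.trans h₂.2.1) (h₁.leftLim_left hrc hll)
    h₂.2.2.2.1 fun t ht => h₁.sInf_eq hrc hll ▸ ?_
  obtain rfl | htr := eq_or_ne t r
  · exact hr
  · exact h₁.sInf_lt_of_ne h₂ hrc hll ht htr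

theorem isLocalMin_of_append (h₁ : IsExcursionInterval f l r) (h₂ : IsExcursionInterval f r r')
    (hrc : RightCont f) (hll : HasLeftLimits f) (hr : f r = sInf (f '' Icc 0 r)) :
    IsLocalMin f r := by
  filter_upwards [isOpen_Ioo.mem_nhds ⟨h₁.2.1, h₂.2.1⟩] with t ht
  obtain rfl | htr := eq_or_ne t r
  · exact le_rfl
  · exact hr ▸ (h₁.sInf_lt_of_ne h₂ hrc hll ht htr).le

/-- By right-continuity `f` stays above the running infimum just after `σ`, whereas the left limit
at the end of an excursion equals the running infimum. -/
theorem exists_gap (h : IsExcursionInterval f l r) (hrc : RightCont f) (hll : HasLeftLimits f)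
    {σ : ℝ} (hσ : σ ∈ Ioo l r) : ∃ u > σ, ∀ τ ∈ Ioo σ u, ∀ a, ¬ IsExcursionInterval f a τ := by
  obtain ⟨c, hMc, hcσ⟩ := exists_between (h.2.2.2.2 σ hσ)
  obtain ⟨u, hσu, hu⟩ :=
    mem_nhdsGE_iff_exists_Ico_subset.mp ((hrc σ).eventually (eventually_gt_nhds hcσ))
  refine ⟨u, hσu, fun τ hτ a ha => ?_⟩
  have hcτ : c ≤ leftLim f τ := hll.le_leftLim hτ.1 fun t ht => (hu ⟨ht.1.le, ht.2.trans hτ.2⟩).le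
  have hτl : leftLim f τ ≤ sInf (f '' Icc 0 l) :=
    ha.2.2.2.1 ▸ hrc.sInf_image_Icc_le_of_le hll h.1 (hσ.1.trans hτ.1).le
  linarith

theorem disjoint_excEnds {T : ℝ} (h : IsExcursionInterval f l r) (hrc : RightCont f)
    (hll : HasLeftLimits f) (hperf : ∀ ρ ∈ ExcEnds f T, ρ ∈ closure (ExcEnds f T \ {ρ})) :
    Disjoint (ExcEnds f T) (Ioo l r) :=
  disjoint_Ioo_of_forall_mem_closure_diff_of_gaps hperf fun _ hσ =>
    let ⟨u, hσu, hu⟩ := h.exists_gap hrc hll hσ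
    ⟨u, hσu, disjoint_left.mpr fun τ ⟨a, ha, _⟩ hτ => hu τ hτ a ha⟩

end IsExcursionInterval

theorem good_excursions_ordered_general (f : ℝ → ℝ) (T : ℝ)
    (hrc : RightCont f) (hll : HasLeftLimits f)
    (hgood : GoodOn f T)
    (l₁ r₁ l₂ r₂ : ℝ)
    (h₁ : IsExcursionInterval f l₁ r₁) (hr₁ : r₁ ≤ T)
    (h₂ : IsExcursionInterval f l₂ r₂)
    (hl : l₁ < l₂) :
    r₁ < l₂ := by
  by_contra! hle
  obtain hlt | rfl := hle.lt_or_eq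
  · have hend : l₂ ∈ ExcEnds f T := ⟨l₁, h₁.restrict h₂ hrc hll hl hlt, hlt.le.trans hr₁⟩
    exact disjoint_left.mp (h₁.disjoint_excEnds hrc hll hgood.1) hend ⟨hl, hlt⟩
  · have hend : l₂ ∈ ExcEnds f T := ⟨l₁, h₁, hr₁⟩
    obtain hlt | heq := (hrc.sInf_image_Icc_le hll ⟨h₁.1.trans hl.le, le_rfl⟩).lt_or_eq
    · exact disjoint_left.mp ((h₁.append h₂ hrc hll hlt).disjoint_excEnds hrc hll hgood.1) hend
        ⟨hl, h₂.2.1⟩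
    · exact hgood.2.2 l₂ hend (h₁.isLocalMin_of_append h₂ hrc hll heq.symm)

/-- Excursion intervals of a good càdlàg function without negative jumps are not
nested: if `(l₁, r₁)` and `(l₂, r₂)` are excursion intervals (with endpoints in
`[0,T]`) and `l₁ < l₂`, then `r₁ < l₂`. -/
theorem good_excursions_ordered (f : ℝ → ℝ) (T : ℝ)
    (hrc : RightCont f) (hll : HasLeftLimits f) (hnn : NoNegJumps f)
    (hgood : GoodOn f T)
    (l₁ r₁ l₂ r₂ : ℝ)
    (h₁ : IsExcursionInterval f l₁ r₁) (hr₁ : r₁ ≤ T)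
    (h₂ : IsExcursionInterval f l₂ r₂) (hr₂ : r₂ ≤ T)
    (hl : l₁ < l₂) :
    r₁ < l₂ :=
  good_excursions_ordered_general f T hrc hll hgood l₁ r₁ l₂ r₂ h₁ hr₁ h₂ hl
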